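/- Let K be a field of characteristic zero containing all roots of unity, d ≥ 3 an odd integer, V a d-dimensional K-vector space, and φ : V × V → K a nondegenerate symmetric K-bilinear form that is anisotropic. Let G be a finite subgroup of PO(V,φ) = GO(V,φ)/(K*·1_V). Then G is commutative, every non-identity element of G has order 2, and the order of G divides 2^{d-1}. -/

import Mathlib

/-!
In odd dimension `d` the multiplier `μ` of a similitude `u` is a square, because
`det u ^ 2 = μ ^ d`; hence every element of `PO(V,φ)` lifts to an isometry `t`. If the class of
`t` has finite order `n`, then `t ^ n` is a scalar isometry, so `t ^ (2 * n) = 1` by anisotropy.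
Since `K` contains the `2n`-th roots of unity, `X ^ (2 * n) - 1` splits into distinct linear
factors, and an eigenvalue `l` of `t` satisfies `l ^ 2 φ(x,x) = φ(x,x)`, so `t ^ 2 = 1`.
Thus the preimage of `G` in `O(V,φ)` is a group of involutions; splitting `V` into the
`±1`-eigenspaces of a non-scalar element shows by induction on `d` that its order divides `2 ^ d`.
It maps onto `G` with `-1` in the kernel, so `2 * |G|` divides `2 ^ d`.
-/

variable {K V : Type*} [Field K] [AddCommGroup V] [Module K V]

/-- The group of similitudes `GO(V,φ)`: the subgroup of the group of `K`-linear
automorphisms of `V` consisting of those `u` for which there is `μ ∈ K*` with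
`φ(ux,uy) = μ·φ(x,y)` for all `x,y ∈ V`. -/
def similitudeSubgroup (φ : LinearMap.BilinForm K V) : Subgroup (V ≃ₗ[K] V) where
  carrier := {u | ∃ μ : K, μ ≠ 0 ∧ ∀ x y : V, φ (u x) (u y) = μ * φ x y}
  one_mem' := ⟨1, one_ne_zero, fun x y => by rw [one_mul]; rfl⟩
  mul_mem' := by
    rintro u v ⟨μ, hμ, hu⟩ ⟨ν, hν, hv⟩
    refine ⟨μ * ν, mul_ne_zero hμ hν, fun x y => ?_⟩
    have h : φ ((u * v) x) ((u * v) y) = φ (u (v x)) (u (v y)) := rfl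
    rw [h, hu, hv]; ring
  inv_mem' := by
    rintro u ⟨μ, hμ, hu⟩
    refine ⟨μ⁻¹, inv_ne_zero hμ, fun x y => ?_⟩
    have h := hu ((u⁻¹ : V ≃ₗ[K] V) x) ((u⁻¹ : V ≃ₗ[K] V) y)
    rw [show u ((u⁻¹ : V ≃ₗ[K] V) x) = x from u.apply_symm_apply x,
      show u ((u⁻¹ : V ≃ₗ[K] V) y) = y from u.apply_symm_apply y] at h
    rw [h, inv_mul_cancel_left₀ hμ]

/-- The central subgroup `K*·1_V` of `GO(V,φ)` consisting of the nonzero scalar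
automorphisms. -/
def scalarSubgroup (φ : LinearMap.BilinForm K V) : Subgroup (similitudeSubgroup φ) where
  carrier := {u | ∃ c : K, c ≠ 0 ∧ ∀ x : V, (u : V ≃ₗ[K] V) x = c • x}
  one_mem' := ⟨1, one_ne_zero, fun x => by simp⟩
  mul_mem' := by
    rintro u v ⟨c, hc, hcu⟩ ⟨d, hd, hdv⟩
    refine ⟨c * d, mul_ne_zero hc hd, fun x => ?_⟩
    have h : ((u * v : similitudeSubgroup φ) : V ≃ₗ[K] V) x
        = (u : V ≃ₗ[K] V) ((v : V ≃ₗ[K] V) x) := rfl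
    rw [h, hdv, map_smul, hcu, smul_smul, mul_comm]
  inv_mem' := by
    rintro u ⟨c, hc, hcu⟩
    refine ⟨c⁻¹, inv_ne_zero hc, fun x => ?_⟩
    apply (u : V ≃ₗ[K] V).injective
    rw [show ((u⁻¹ : similitudeSubgroup φ) : V ≃ₗ[K] V) x = (u : V ≃ₗ[K] V).symm x from rfl,
      (u : V ≃ₗ[K] V).apply_symm_apply, map_smul, hcu, smul_smul, inv_mul_cancel₀ hc, one_smul]

instance scalarSubgroup_normal (φ : LinearMap.BilinForm K V) : (scalarSubgroup φ).Normal := by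
  constructor
  rintro n ⟨c, hc, hn⟩ g
  refine ⟨c, hc, fun x => ?_⟩
  have h1 : ((g * n * g⁻¹ : similitudeSubgroup φ) : V ≃ₗ[K] V) x
      = (g : V ≃ₗ[K] V) ((n : V ≃ₗ[K] V) ((g : V ≃ₗ[K] V).symm x)) := rfl
  rw [h1, hn, map_smul, (g : V ≃ₗ[K] V).apply_symm_apply]

/-- The projective orthogonal group `PO(V,φ) = GO(V,φ)/(K*·1_V)`. -/
abbrev projOrthogonalGroup (φ : LinearMap.BilinForm K V) :=
  similitudeSubgroup φ ⧸ scalarSubgroup φ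

open Polynomial Module

theorem Subgroup.commute_of_forall_mul_self_eq_one {G : Type*} [Group G] (H : Subgroup G)
    (hH : ∀ g ∈ H, g * g = 1) {a b : G} (ha : a ∈ H) (hb : b ∈ H) : Commute a b :=
  (Commute.of_orderOf_dvd_two (fun g : H => orderOf_dvd_of_pow_eq_one
    (Subtype.ext (by rw [sq]; exact hH g g.2))) ⟨a, ha⟩ ⟨b, hb⟩).map H.subtype

theorem MonoidHom.card_mul_orderOf_dvd_of_surjective {A B : Type*} [Group A] [Group B]
    (f : A →* B) (hf : Function.Surjective f) {a : A} (ha : a ∈ f.ker) :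
    Nat.card B * orderOf a ∣ Nat.card A := by
  rw [Subgroup.card_eq_card_quotient_mul_card_subgroup f.ker,
    Nat.card_congr (QuotientGroup.quotientKerEquivOfSurjective f hf).toEquiv]
  exact mul_dvd_mul_left _ (Subgroup.orderOf_mk a ha ▸ orderOf_dvd_natCard _)

section Isometry

variable {φ : LinearMap.BilinForm K V} {w : Module.End K V}

theorem sq_eq_one_of_hasEigenvalue (haniso : ∀ v : V, v ≠ 0 → φ v v ≠ 0)
    (hw : ∀ x, φ (w x) (w x) = φ x x) {l : K} (hl : w.HasEigenvalue l) : l ^ 2 = 1 := by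
  obtain ⟨x, hx⟩ := hl.exists_hasEigenvector
  have h := hw x
  simp only [hx.apply_eq_smul, map_smul, LinearMap.smul_apply, smul_eq_mul] at h
  have h' : (l ^ 2 - 1) * φ x x = 0 := by linear_combination h
  exact sub_eq_zero.mp ((mul_eq_zero.mp h').resolve_right (haniso x hx.2))

theorem sq_eq_one_of_pow_eq_one (haniso : ∀ v : V, v ≠ 0 → φ v v ≠ 0)
    (hw : ∀ x, φ (w x) (w x) = φ x x) {m : ℕ} (hm : 0 < m) {ζ : K} (hζ : IsPrimitiveRoot ζ m)
    (hwm : w ^ m = 1) : w ^ 2 = 1 := by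
  classical
  set S := nthRootsFinset m (1 : K)
  have hsplit : (X ^ m - 1 : K[X]) =
      (∏ l ∈ S with ¬ l ^ 2 = 1, (X - C l)) * ∏ l ∈ S with l ^ 2 = 1, (X - C l) := by
    rw [mul_comm, Finset.prod_filter_mul_prod_filter_not, X_pow_sub_one_eq_prod hm hζ]
  have hinj : Function.Injective (aeval w (∏ l ∈ S with ¬ l ^ 2 = 1, (X - C l))) := by
    refine Finset.prod_induction _ (fun p => Function.Injective (aeval w p))
      (fun p q hp hq => by simpa only [map_mul, Module.End.coe_mul] using hp.comp hq)
      (by rw [map_one, Module.End.coe_one]; exact Function.injective_id) fun l hl => ?_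
    rw [← LinearMap.ker_eq_bot, map_sub, aeval_X, aeval_C, Algebra.algebraMap_eq_smul_one,
      ← Module.End.eigenspace_def]
    by_contra h
    exact (Finset.mem_filter.mp hl).2 (sq_eq_one_of_hasEigenvalue haniso hw h)
  have hzero : aeval w (∏ l ∈ S with l ^ 2 = 1, (X - C l)) = 0 := by
    ext x
    apply hinj
    rw [← Module.End.mul_apply, ← map_mul, ← hsplit]
    simp [hwm]
  have hdvd : ∏ l ∈ S with l ^ 2 = 1, (X - C l) ∣ (X ^ 2 - 1 : K[X]) :=
    Finset.prod_dvd_of_coprime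
      ((pairwise_coprime_X_sub_C (s := fun l : K => l) fun _ _ h => h).set_pairwise _)
      fun l hl => dvd_iff_isRoot.mpr (by simp [(Finset.mem_filter.mp hl).2])
  simpa [sub_eq_zero] using aeval_eq_zero_of_dvd_aeval_eq_zero hdvd hzero

theorem isometry_pow_apply (hw : ∀ x, φ (w x) (w x) = φ x x) (k : ℕ) (x : V) :
    φ ((w ^ k) x) ((w ^ k) x) = φ x x := by
  induction k with
  | zero => rfl
  | succ k ih => rw [pow_succ', Module.End.mul_apply, hw, ih]

theorem sq_eq_one_of_pow_eq_smul_one (hroots : ∀ n : ℕ, 0 < n → ∃ ζ : K, IsPrimitiveRoot ζ n)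
    (haniso : ∀ v : V, v ≠ 0 → φ v v ≠ 0) (hw : ∀ x, φ (w x) (w x) = φ x x) {n : ℕ}
    (hn : 0 < n) {c : K} (hc : w ^ n = c • 1) : w ^ 2 = 1 := by
  obtain ⟨ζ, hζ⟩ := hroots (2 * n) (by omega)
  refine sq_eq_one_of_pow_eq_one haniso hw (by omega) hζ (LinearMap.ext fun x => ?_)
  rcases eq_or_ne x 0 with rfl | hx
  · simp
  have hc2 : c ^ 2 = 1 := sq_eq_one_of_hasEigenvalue haniso (isometry_pow_apply hw n)
    (Module.End.hasEigenvalue_of_hasEigenvector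
      ⟨Module.End.mem_eigenspace_iff.mpr (by rw [hc]; rfl), hx⟩)
  simp [pow_mul', hc, _root_.smul_pow, hc2]

end Isometry

section Involutions

variable {M : Type*} [AddCommGroup M] [Module K M]

theorem Module.End.isCompl_eigenspace_one_neg_one [NeZero (2 : K)] {u : Module.End K M}
    (hu : u * u = 1) : IsCompl (u.eigenspace 1) (u.eigenspace (-1)) := by
  have hcop : IsCoprime (X - C 1 : K[X]) (X - C (-1)) :=
    isCoprime_X_sub_C_of_isUnit_sub (by simpa [one_add_one_eq_two] using two_ne_zero)
  have hker (μ : K) : LinearMap.ker (aeval u (X - C μ)) = u.eigenspace μ := by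
    rw [map_sub, aeval_X, aeval_C, Algebra.algebraMap_eq_smul_one, Module.End.eigenspace_def]
  have hprod : aeval u ((X - C 1) * (X - C (-1)) : K[X]) = u * u - 1 := by
    simp only [map_mul, map_sub, aeval_X, map_neg, map_one]
    noncomm_ring
  refine ⟨?_, ?_⟩
  · rw [← hker, ← hker]
    exact disjoint_ker_aeval_of_isCoprime u hcop
  · rw [codisjoint_iff, ← hker, ← hker, sup_ker_aeval_eq_ker_aeval_mul_of_coprime u hcop]
    exact LinearMap.ker_eq_top.mpr (hprod.trans (by rw [hu, sub_self]))

theorem Module.End.finrank_eigenspace_lt [FiniteDimensional K M] {u : Module.End K M} {μ : K}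
    (hu : u ≠ μ • 1) : finrank K (u.eigenspace μ) < finrank K M :=
  Submodule.finrank_lt fun htop => hu <| LinearMap.ext fun x => by
    have hx : x ∈ u.eigenspace μ := htop ▸ Submodule.mem_top
    simpa using Module.End.mem_eigenspace_iff.mp hx

theorem LinearEquiv.orderOf_neg [NeZero (2 : K)] [Nontrivial M] :
    orderOf (LinearEquiv.neg K : M ≃ₗ[K] M) = 2 := by
  refine orderOf_eq_prime (by ext; simp [sq]) fun h => ?_
  obtain ⟨x, hx⟩ := exists_ne (0 : M)
  have hneg : -x = x := by simpa using DFunLike.congr_fun h x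
  have h2 : (2 : K) • x = 0 := by
    rw [two_smul]
    nth_rw 1 [← hneg]
    exact neg_add_cancel x
  exact hx ((smul_eq_zero.mp h2).resolve_left two_ne_zero)

def Subgroup.restrictInvariant (H : Subgroup (M ≃ₗ[K] M)) (W : Submodule K M)
    (hW : ∀ u ∈ H, ∀ x ∈ W, u x ∈ W) : H →* (W ≃ₗ[K] W) where
  toFun u := .ofLinearMap (f := (u : M ≃ₗ[K] M).toLinearMap.restrict (hW u u.2))
    (g := ((u⁻¹ : H) : M ≃ₗ[K] M).toLinearMap.restrict (hW _ (u⁻¹).2))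
    (by ext x; exact (u : M ≃ₗ[K] M).apply_symm_apply x)
    (by ext x; exact (u : M ≃ₗ[K] M).symm_apply_apply x)
  map_one' := rfl
  map_mul' _ _ := rfl

theorem Subgroup.restrictInvariant_prod_injective (H : Subgroup (M ≃ₗ[K] M))
    {W₁ W₂ : Submodule K M} (hW : Codisjoint W₁ W₂) (hW₁ : ∀ u ∈ H, ∀ x ∈ W₁, u x ∈ W₁)
    (hW₂ : ∀ u ∈ H, ∀ x ∈ W₂, u x ∈ W₂) :
    Function.Injective ((H.restrictInvariant W₁ hW₁).prod (H.restrictInvariant W₂ hW₂)) :=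
  fun _ _ huv => Subtype.ext <| LinearEquiv.toLinearMap_injective <| LinearMap.ext_on_codisjoint hW
    (fun x hx => congrArg Subtype.val (DFunLike.congr_fun (congrArg Prod.fst huv) ⟨x, hx⟩))
    (fun x hx => congrArg Subtype.val (DFunLike.congr_fun (congrArg Prod.snd huv) ⟨x, hx⟩))

theorem Subgroup.card_dvd_two_pow_finrank [NeZero (2 : K)] [FiniteDimensional K M]
    (H : Subgroup (M ≃ₗ[K] M)) (hH : ∀ u ∈ H, u * u = 1) :
    Nat.card H ∣ 2 ^ finrank K M := by
  induction hn : finrank K M using Nat.strong_induction_on generalizing M with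
  | _ n ih =>
  rcases Nat.eq_zero_or_pos n with rfl | hn0
  · have : Subsingleton M := finrank_zero_iff.mp hn
    simp
  by_cases hscalar : H ≤ Subgroup.zpowers (LinearEquiv.neg K)
  · calc Nat.card H ∣ Nat.card (Subgroup.zpowers (LinearEquiv.neg K : M ≃ₗ[K] M)) :=
          Subgroup.card_dvd_of_le hscalar
      _ = orderOf (LinearEquiv.neg K : M ≃ₗ[K] M) := Nat.card_zpowers _
      _ ∣ 2 := orderOf_dvd_of_pow_eq_one (by ext; simp [sq])
      _ ∣ 2 ^ n := dvd_pow_self 2 hn0.ne'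
  obtain ⟨u₀, hu₀H, hu₀⟩ := SetLike.not_le_iff_exists.mp hscalar
  set e : Module.End K M := u₀.toLinearMap
  have hcompl : IsCompl (e.eigenspace 1) (e.eigenspace (-1)) :=
    Module.End.isCompl_eigenspace_one_neg_one (congrArg LinearEquiv.toLinearMap (hH u₀ hu₀H))
  have hinvariant (μ : K) (u : M ≃ₗ[K] M) (hu : u ∈ H) : ∀ x ∈ e.eigenspace μ, u x ∈ e.eigenspace μ :=
    Module.End.mapsTo_genEigenspace_of_comm
      ((H.commute_of_forall_mul_self_eq_one hH hu₀H hu).map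
        LinearEquiv.automorphismGroup.toLinearMapMonoidHom) μ 1
  have hrange (W : Submodule K M) (hW : ∀ u ∈ H, ∀ x ∈ W, u x ∈ W) :
      ∀ v ∈ (H.restrictInvariant W hW).range, v * v = 1 := by
    rintro _ ⟨u, rfl⟩
    rw [← map_mul, show u * u = 1 from Subtype.ext (hH u u.2), map_one]
  have hlt₁ : finrank K (e.eigenspace 1) < n := hn ▸ Module.End.finrank_eigenspace_lt fun h =>
    hu₀ (by convert (Subgroup.zpowers _).one_mem; ext x; simpa [e] using LinearMap.congr_fun h x)
  have hlt₂ : finrank K (e.eigenspace (-1)) < n := hn ▸ Module.End.finrank_eigenspace_lt fun h =>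
    hu₀ (by convert Subgroup.mem_zpowers _; ext x; simpa [e] using LinearMap.congr_fun h x)
  set ρ₁ := H.restrictInvariant _ (hinvariant 1)
  set ρ₂ := H.restrictInvariant _ (hinvariant (-1))
  calc Nat.card H ∣ Nat.card (ρ₁.range.prod ρ₂.range) :=
        Subgroup.card_dvd_of_injective ((ρ₁.prod ρ₂).codRestrict _ fun u => ⟨⟨u, rfl⟩, ⟨u, rfl⟩⟩)
          fun u v huv => H.restrictInvariant_prod_injective hcompl.codisjoint _ _
            (congrArg Subtype.val huv)
    _ = Nat.card ρ₁.range * Nat.card ρ₂.range := by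
        rw [Nat.card_congr (Subgroup.prodEquiv _ _).toEquiv, Nat.card_prod]
    _ ∣ 2 ^ finrank K (e.eigenspace 1) * 2 ^ finrank K (e.eigenspace (-1)) :=
        mul_dvd_mul (ih _ hlt₁ _ (hrange _ _) rfl) (ih _ hlt₂ _ (hrange _ _) rfl)
    _ = 2 ^ n := by rw [← pow_add, Submodule.finrank_add_eq_of_isCompl hcompl, hn]

end Involutions

section Orthogonal

theorem isSquare_of_similitude [FiniteDimensional K V] (hodd : Odd (finrank K V))
    {φ : LinearMap.BilinForm K V} (hnondeg : ∀ x : V, (∀ y : V, φ x y = 0) → x = 0)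
    {u : V →ₗ[K] V} {μ : K} (hμ : μ ≠ 0) (hu : ∀ x y : V, φ (u x) (u y) = μ * φ x y) :
    IsSquare μ := by
  let b := Module.finBasis K V
  set M := LinearMap.BilinForm.toMatrix b φ
  set A := LinearMap.toMatrix b b u
  have hmat : A.transpose * M * A = μ • M := by
    rw [← LinearMap.BilinForm.toMatrix_comp, ← map_smul]
    congr 1
    ext x y
    exact hu x y
  have hdetM : M.det ≠ 0 := (LinearMap.BilinForm.nondegenerate_iff_det_ne_zero b).mp
    (LinearMap.BilinForm.Nondegenerate.ofSeparatingLeft hnondeg)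
  have hdet : A.det * A.det = μ ^ finrank K V := by
    have h := congrArg Matrix.det hmat
    rw [Matrix.det_mul, Matrix.det_mul, Matrix.det_transpose, Matrix.det_smul,
      Fintype.card_fin] at h
    exact mul_right_cancel₀ hdetM (by linear_combination h)
  obtain ⟨e, he⟩ := hodd
  refine ⟨A.det / μ ^ e, ?_⟩
  field_simp
  rw [sq A.det, hdet, he]
  ring

def orthogonalSubgroup (φ : LinearMap.BilinForm K V) : Subgroup (V ≃ₗ[K] V) where
  carrier := {u | φ.IsOrthogonal u}
  one_mem' _ _ := rfl
  mul_mem' hu hv x y := (hu _ _).trans (hv x y)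
  inv_mem' {u} hu x y := by
    simpa using (hu ((u⁻¹ : V ≃ₗ[K] V) x) ((u⁻¹ : V ≃ₗ[K] V) y)).symm

theorem orthogonalSubgroup_le_similitudeSubgroup (φ : LinearMap.BilinForm K V) :
    orthogonalSubgroup φ ≤ similitudeSubgroup φ :=
  fun _ hu => ⟨1, one_ne_zero, fun x y => (hu x y).trans (one_mul _).symm⟩

def orthogonalToProj (φ : LinearMap.BilinForm K V) :
    orthogonalSubgroup φ →* projOrthogonalGroup φ :=
  (QuotientGroup.mk' _).comp (Subgroup.inclusion (orthogonalSubgroup_le_similitudeSubgroup φ))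

theorem orthogonalToProj_surjective [FiniteDimensional K V] (hodd : Odd (finrank K V))
    {φ : LinearMap.BilinForm K V} (hnondeg : ∀ x : V, (∀ y : V, φ x y = 0) → x = 0) :
    Function.Surjective (orthogonalToProj φ) := by
  rintro ⟨u⟩
  obtain ⟨μ, hμ, hu⟩ := u.2
  obtain ⟨ν, rfl⟩ := isSquare_of_similitude hodd hnondeg hμ hu
  have hν : ν ≠ 0 := by rintro rfl; simp at hμ
  let t := (u : V ≃ₗ[K] V).trans (LinearEquiv.smulOfNeZero K V ν⁻¹ (inv_ne_zero hν))
  have ht : t ∈ orthogonalSubgroup φ := fun x y => by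
    simp only [t, LinearEquiv.trans_apply, LinearEquiv.smulOfNeZero_apply, map_smul,
      LinearMap.smul_apply, hu, smul_eq_mul]
    field_simp
  refine ⟨⟨t, ht⟩, (QuotientGroup.eq (s := scalarSubgroup φ)).mpr ⟨ν, hν, fun x => ?_⟩⟩
  change t.symm ((u : V ≃ₗ[K] V) x) = ν • x
  simp [t, Units.smul_def]

theorem neg_mem_orthogonalSubgroup (φ : LinearMap.BilinForm K V) :
    LinearEquiv.neg K ∈ orthogonalSubgroup φ := fun x y => by simp

theorem orthogonalToProj_neg (φ : LinearMap.BilinForm K V) :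
    orthogonalToProj φ ⟨_, neg_mem_orthogonalSubgroup φ⟩ = 1 :=
  (QuotientGroup.eq_one_iff _).mpr ⟨-1, by norm_num, fun x => by simp⟩

theorem mul_self_eq_one_of_isOfFinOrder (hroots : ∀ n : ℕ, 0 < n → ∃ ζ : K, IsPrimitiveRoot ζ n)
    {φ : LinearMap.BilinForm K V} (haniso : ∀ v : V, v ≠ 0 → φ v v ≠ 0)
    {t : orthogonalSubgroup φ} (ht : IsOfFinOrder (orthogonalToProj φ t)) : t * t = 1 := by
  obtain ⟨n, hn, htn⟩ := ht.exists_pow_eq_one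
  rw [← map_pow] at htn
  obtain ⟨c, -, hc⟩ := (QuotientGroup.eq_one_iff _).mp htn
  let f := LinearEquiv.automorphismGroup.toLinearMapMonoidHom.comp (orthogonalSubgroup φ).subtype
  have hf : Function.Injective f := fun a b hab =>
    Subtype.ext (LinearEquiv.toLinearMap_injective hab)
  have hsq : f t ^ 2 = 1 := sq_eq_one_of_pow_eq_smul_one hroots haniso (fun x => t.2 x x) hn
    (c := c) (by rw [← map_pow]; exact LinearMap.ext hc)
  exact hf (by rw [map_mul, ← sq, hsq, map_one])

end Orthogonal

theorem stmt11_general {K V : Type*} [Field K] [CharZero K] [AddCommGroup V] [Module K V]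
    [FiniteDimensional K V] (hodd : Odd (Module.finrank K V))
    (hroots : ∀ n : ℕ, 0 < n → ∃ ζ : K, IsPrimitiveRoot ζ n)
    (φ : LinearMap.BilinForm K V)
    (hnondeg : ∀ x : V, (∀ y : V, φ x y = 0) → x = 0)
    (haniso : ∀ v : V, v ≠ 0 → φ v v ≠ 0)
    (G : Subgroup (projOrthogonalGroup φ)) (hGfin : Finite G) :
    (∀ a ∈ G, ∀ b ∈ G, a * b = b * a) ∧ (∀ g ∈ G, g ≠ 1 → orderOf g = 2) ∧
      Nat.card G ∣ 2 ^ (Module.finrank K V - 1) := by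
  have hsurj := orthogonalToProj_surjective hodd hnondeg
  have hlift (t : orthogonalSubgroup φ) (ht : orthogonalToProj φ t ∈ G) : t * t = 1 :=
    mul_self_eq_one_of_isOfFinOrder hroots haniso
      (G.subtype.isOfFinOrder (isOfFinOrder_of_finite ⟨_, ht⟩))
  have hsq : ∀ g ∈ G, g * g = 1 := fun g hg => by
    obtain ⟨t, rfl⟩ := hsurj g
    rw [← map_mul, hlift t hg, map_one]
  refine ⟨fun a ha b hb => (G.commute_of_forall_mul_self_eq_one hsq ha hb).eq,
    fun g hg hg1 => orderOf_eq_prime (by rw [sq]; exact hsq g hg) hg1, ?_⟩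
  have hĜ : Nat.card (G.comap (orthogonalToProj φ)) ∣ 2 ^ finrank K V := by
    rw [← Subgroup.card_map_of_injective (orthogonalSubgroup φ).subtype_injective]
    refine Subgroup.card_dvd_two_pow_finrank _ ?_
    rintro _ ⟨t, ht, rfl⟩
    exact congrArg Subtype.val (hlift t ht)
  have : Nontrivial V := Module.finrank_pos_iff.mp hodd.pos
  let neg : G.comap (orthogonalToProj φ) :=
    ⟨⟨_, neg_mem_orthogonalSubgroup φ⟩, by simp [orthogonalToProj_neg, G.one_mem]⟩
  have hcard := ((orthogonalToProj φ).subgroupComap G).card_mul_orderOf_dvd_of_surjective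
    (MonoidHom.subgroupComap_surjective_of_surjective _ _ hsurj) (a := neg)
    (Subtype.ext (orthogonalToProj_neg φ))
  rw [Subgroup.orderOf_mk, Subgroup.orderOf_mk, LinearEquiv.orderOf_neg] at hcard
  refine Nat.dvd_of_mul_dvd_mul_right two_pos ?_
  rw [← pow_succ, Nat.sub_add_cancel hodd.pos]
  exact hcard.trans hĜ

/-- Let `K` be a field of characteristic zero containing all roots of
unity, `d ≥ 3` an odd integer, `V` a `d`-dimensional `K`-vector space, and `φ` a
nondegenerate symmetric anisotropic `K`-bilinear form on `V`. Let `G` be a finite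
subgroup of `PO(V,φ) = GO(V,φ)/(K*·1_V)`. Then `G` is commutative, every non-identity
element of `G` has order `2`, and the order of `G` divides `2 ^ (d-1)`. -/
theorem stmt11 {K V : Type*} [Field K] [CharZero K] [AddCommGroup V] [Module K V]
    [FiniteDimensional K V] (hd3 : 3 ≤ Module.finrank K V) (hodd : Odd (Module.finrank K V))
    (hroots : ∀ n : ℕ, 0 < n → ∃ ζ : K, IsPrimitiveRoot ζ n)
    (φ : LinearMap.BilinForm K V)
    (hsymm : ∀ x y : V, φ x y = φ y x)
    (hnondeg : ∀ x : V, (∀ y : V, φ x y = 0) → x = 0)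
    (haniso : ∀ v : V, v ≠ 0 → φ v v ≠ 0)
    (G : Subgroup (projOrthogonalGroup φ)) (hGfin : Finite G) :
    (∀ a ∈ G, ∀ b ∈ G, a * b = b * a) ∧ (∀ g ∈ G, g ≠ 1 → orderOf g = 2) ∧
      Nat.card G ∣ 2 ^ (Module.finrank K V - 1) :=
  stmt11_general hodd hroots φ hnondeg haniso G hGfin
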